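/- arXiv:1912.02122 — 7 statements merged into one kernel-verified Lean document; each statement's English description precedes it below -/
import Mathlib

section
/- Let H be a real symmetric positive semidefinite n×n matrix and A a real m×n matrix, and suppose that xᵀHx > 0 for every nonzero vector x in the null space of A. Then for every scalar γ > 0 the matrix H + γAᵀA is symmetric positive definite. -/
open Matrix

/-- If `H` is symmetric positive semidefinite and `xᵀHx > 0` for every nonzero `x` in the
null space of `A`, then for every `γ > 0` the matrix `H + γAᵀA` is symmetric positive
definite. -/
theorem stmt_0 (n m : ℕ) (H : Matrix (Fin n) (Fin n) ℝ) (A : Matrix (Fin m) (Fin n) ℝ)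
    (hHsymm : H.IsSymm) (hHpsd : ∀ x : Fin n → ℝ, 0 ≤ x ⬝ᵥ (H *ᵥ x))
    (hker : ∀ x : Fin n → ℝ, x ≠ 0 → A *ᵥ x = 0 → 0 < x ⬝ᵥ (H *ᵥ x))
    (γ : ℝ) (hγ : 0 < γ) :
    (H + γ • (Aᵀ * A)).IsSymm ∧
      ∀ x : Fin n → ℝ, x ≠ 0 → 0 < x ⬝ᵥ ((H + γ • (Aᵀ * A)) *ᵥ x) := by
  constructor
  · unfold Matrix.IsSymm
    rw [transpose_add, transpose_smul, transpose_mul, transpose_transpose, hHsymm]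
  · intro x hx
    have key : x ⬝ᵥ ((H + γ • (Aᵀ * A)) *ᵥ x)
        = x ⬝ᵥ (H *ᵥ x) + γ * ((A *ᵥ x) ⬝ᵥ (A *ᵥ x)) := by
      rw [add_mulVec, dotProduct_add, smul_mulVec, dotProduct_smul,
        ← mulVec_mulVec, smul_eq_mul]
      congr 1
      rw [dotProduct_mulVec, vecMul_transpose]
    rw [key]
    rcases eq_or_ne (A *ᵥ x) 0 with h | h
    · have := hker x hx h
      rw [h, dotProduct_zero, mul_zero, add_zero]
      exact this
    · have h1 : 0 < (A *ᵥ x) ⬝ᵥ (A *ᵥ x) := by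
        have := dotProduct_self_eq_zero (v := A *ᵥ x)
        have hnn : 0 ≤ (A *ᵥ x) ⬝ᵥ (A *ᵥ x) := Finset.sum_nonneg fun i _ => mul_self_nonneg _
        rcases hnn.lt_or_eq with h2 | h2
        · exact h2
        · exact absurd (this.mp h2.symm) h
      have := hHpsd x
      nlinarith
end

section
/- Let H be a real symmetric positive definite n×n matrix and A a real m×n matrix with full row rank. Let S = A H⁻¹ Aᵀ, K = [[H, Aᵀ], [A, 0]], T = [[H, 0], [0, S]], and M = T⁻¹K. Then (M − I)(M² − M − I) = 0, where I denotes the identity matrix of size n+m. -/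
/-!
Since `T` is block diagonal, `M = T⁻¹K = [[1, B], [C, 0]]` with `B = H⁻¹Aᵀ` and `C = S⁻¹A`,
and `CB = S⁻¹(AH⁻¹Aᵀ) = 1`. Then `M² - M - 1 = [[BC - 1, 0], [0, 0]]`, and multiplying by
`M - 1 = [[0, B], [C, -1]]` leaves only the block `C(BC - 1) = CBC - C = 0`.
The invertibility of `H` and `S` needed on the way comes from the positivity of their quadratic
forms: `xᵀH⁻¹x = yᵀHy` for `y = H⁻¹x`, and `yᵀSy = (Aᵀy)ᵀH⁻¹(Aᵀy)`.
-/

open Matrix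

namespace Matrix

variable {n m 𝕜 : Type*}

theorem fromBlocks_sub {l o R : Type*} [Sub R]
    (A : Matrix n l R) (B : Matrix n m R) (C : Matrix o l R) (D : Matrix o m R)
    (A' : Matrix n l R) (B' : Matrix n m R) (C' : Matrix o l R) (D' : Matrix o m R) :
    fromBlocks A B C D - fromBlocks A' B' C' D' =
      fromBlocks (A - A') (B - B') (C - C') (D - D') := by
  ext (i | i) (j | j) <;> rfl

variable [Fintype n] [Fintype m]

section QuadraticForm

variable [Preorder 𝕜]

theorem isUnit_of_dotProduct_mulVec_pos [Field 𝕜] [DecidableEq n] {P : Matrix n n 𝕜}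
    (hP : ∀ x, x ≠ 0 → 0 < x ⬝ᵥ (P *ᵥ x)) : IsUnit P := by
  refine mulVec_injective_iff_isUnit.mp fun x y hxy => by_contra fun hne => ?_
  have hpos := hP (x - y) (sub_ne_zero.mpr hne)
  rw [mulVec_sub, hxy, sub_self, dotProduct_zero] at hpos
  exact hpos.false

theorem dotProduct_inv_mulVec_pos [Field 𝕜] [DecidableEq n] {P : Matrix n n 𝕜}
    (hP : ∀ x, x ≠ 0 → 0 < x ⬝ᵥ (P *ᵥ x)) (x : n → 𝕜) (hx : x ≠ 0) :
    0 < x ⬝ᵥ (P⁻¹ *ᵥ x) := by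
  have hPy : P *ᵥ (P⁻¹ *ᵥ x) = x := by
    rw [mulVec_mulVec, mul_nonsing_inv _ ((isUnit_iff_isUnit_det P).mp
      (isUnit_of_dotProduct_mulVec_pos hP)), one_mulVec]
  have hy : P⁻¹ *ᵥ x ≠ 0 := fun h => hx (by rw [← hPy, h, mulVec_zero])
  calc 0 < P⁻¹ *ᵥ x ⬝ᵥ (P *ᵥ (P⁻¹ *ᵥ x)) := hP _ hy
    _ = x ⬝ᵥ (P⁻¹ *ᵥ x) := by rw [hPy, dotProduct_comm]

theorem dotProduct_mul_mul_transpose_mulVec_pos [CommSemiring 𝕜] {P : Matrix n n 𝕜}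
    (hP : ∀ x, x ≠ 0 → 0 < x ⬝ᵥ (P *ᵥ x)) {A : Matrix m n 𝕜}
    (hA : ∀ y, Aᵀ *ᵥ y = 0 → y = 0) (y : m → 𝕜) (hy : y ≠ 0) :
    0 < y ⬝ᵥ ((A * P * Aᵀ) *ᵥ y) := by
  calc 0 < Aᵀ *ᵥ y ⬝ᵥ (P *ᵥ (Aᵀ *ᵥ y)) := hP _ fun h => hy (hA y h)
    _ = y ⬝ᵥ ((A * P * Aᵀ) *ᵥ y) := by
      rw [← mulVec_mulVec, ← mulVec_mulVec, dotProduct_mulVec y A, mulVec_transpose]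

end QuadraticForm

variable [DecidableEq n] [DecidableEq m]

theorem inv_fromBlocks_zero₁₂_zero₂₁_mul_fromBlocks_zero₂₂ {R : Type*} [CommRing R]
    {P : Matrix n n R} {Q : Matrix m m R} (hP : IsUnit P) (hQ : IsUnit Q)
    (X : Matrix n m R) (Y : Matrix m n R) :
    (fromBlocks P 0 0 Q)⁻¹ * fromBlocks P X Y 0 = fromBlocks 1 (P⁻¹ * X) (Q⁻¹ * Y) 0 := by
  rw [inv_fromBlocks_zero₁₂_of_isUnit_iff _ _ _ (iff_of_true hP hQ), fromBlocks_multiply,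
    nonsing_inv_mul _ ((isUnit_iff_isUnit_det P).mp hP)]
  simp

theorem fromBlocks_one_zero₂₂_annihilated {R : Type*} [Ring R]
    {B : Matrix n m R} {C : Matrix m n R} (hCB : C * B = 1) :
    let M := fromBlocks 1 B C 0
    (M - 1) * (M * M - M - 1) = 0 := by
  intro M
  have hsq : M * M - M - 1 = fromBlocks (B * C - 1) 0 0 0 := by
    simp only [M, fromBlocks_multiply, ← fromBlocks_one, hCB, fromBlocks_sub]
    congr 1 <;> simp
  have hCBC : C * (B * C - 1) = 0 := by
    rw [Matrix.mul_sub, ← Matrix.mul_assoc, hCB, Matrix.one_mul, Matrix.mul_one, sub_self]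
  rw [hsq, ← fromBlocks_one, fromBlocks_sub, fromBlocks_multiply]
  simp [hCBC]

end Matrix

theorem stmt_4_general (n m : ℕ) (H : Matrix (Fin n) (Fin n) ℝ) (A : Matrix (Fin m) (Fin n) ℝ)
    (hHpd : ∀ x : Fin n → ℝ, x ≠ 0 → 0 < x ⬝ᵥ (H *ᵥ x))
    (hrank : ∀ y : Fin m → ℝ, Aᵀ *ᵥ y = 0 → y = 0) :
    let S : Matrix (Fin m) (Fin m) ℝ := A * H⁻¹ * Aᵀ
    let K : Matrix (Fin n ⊕ Fin m) (Fin n ⊕ Fin m) ℝ :=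
      Matrix.fromBlocks H Aᵀ A (0 : Matrix (Fin m) (Fin m) ℝ)
    let T : Matrix (Fin n ⊕ Fin m) (Fin n ⊕ Fin m) ℝ :=
      Matrix.fromBlocks H 0 0 S
    let M : Matrix (Fin n ⊕ Fin m) (Fin n ⊕ Fin m) ℝ := T⁻¹ * K
    (M - 1) * (M * M - M - 1) = 0 := by
  intro S K T M
  have hH : IsUnit H := isUnit_of_dotProduct_mulVec_pos hHpd
  have hS : IsUnit S := isUnit_of_dotProduct_mulVec_pos <|
    dotProduct_mul_mul_transpose_mulVec_pos (dotProduct_inv_mulVec_pos hHpd) hrank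
  have hM : M = fromBlocks 1 (H⁻¹ * Aᵀ) (S⁻¹ * A) 0 :=
    inv_fromBlocks_zero₁₂_zero₂₁_mul_fromBlocks_zero₂₂ hH hS Aᵀ A
  have hCB : S⁻¹ * A * (H⁻¹ * Aᵀ) = 1 := by
    rw [Matrix.mul_assoc, ← Matrix.mul_assoc A]
    exact nonsing_inv_mul S ((isUnit_iff_isUnit_det S).mp hS)
  rw [hM]
  exact fromBlocks_one_zero₂₂_annihilated hCB

/-- With `H` symmetric positive definite, `A` of full row rank, `S = A H⁻¹ Aᵀ`,
`K = [[H, Aᵀ],[A, 0]]`, `T = diag(H, S)` and `M = T⁻¹K`, the annihilation identity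
`(M − I)(M² − M − I) = 0` holds. -/
theorem stmt_4 (n m : ℕ) (H : Matrix (Fin n) (Fin n) ℝ) (A : Matrix (Fin m) (Fin n) ℝ)
    (hHsymm : H.IsSymm) (hHpd : ∀ x : Fin n → ℝ, x ≠ 0 → 0 < x ⬝ᵥ (H *ᵥ x))
    (hrank : ∀ y : Fin m → ℝ, Aᵀ *ᵥ y = 0 → y = 0) :
    let S : Matrix (Fin m) (Fin m) ℝ := A * H⁻¹ * Aᵀ
    let K : Matrix (Fin n ⊕ Fin m) (Fin n ⊕ Fin m) ℝ :=
      Matrix.fromBlocks H Aᵀ A (0 : Matrix (Fin m) (Fin m) ℝ)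
    let T : Matrix (Fin n ⊕ Fin m) (Fin n ⊕ Fin m) ℝ :=
      Matrix.fromBlocks H 0 0 S
    let M : Matrix (Fin n ⊕ Fin m) (Fin n ⊕ Fin m) ℝ := T⁻¹ * K
    (M - 1) * (M * M - M - 1) = 0 :=
  stmt_4_general n m H A hHpd hrank
end

section
/- Let H be a real symmetric positive definite n×n matrix and A a real m×n matrix with full row rank. Let S = A H⁻¹ Aᵀ, K = [[H, Aᵀ], [A, 0]], T = [[H, 0], [0, S]], and M = T⁻¹K. Then every eigenvalue λ of M (i.e., every scalar λ for which there exists a nonzero vector v with Mv = λv) belongs to the set {1, (1+√5)/2, (1−√5)/2}. -/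
/-!
Write an eigenvector as `v = (x, y)`. Since `T` is invertible, `T⁻¹ K v = λ v` means `K v = λ T v`,
i.e. `H x + Aᵀ y = λ H x` and `A x = λ S y`. If `y = 0` this forces `λ = 1`. Otherwise
`H⁻¹ Aᵀ y = (λ - 1) x`, so `S y = (λ - 1) A x = (λ - 1) λ S y` with `S y ≠ 0`, whence
`λ² = λ + 1`. Invertibility of `H` and `S` comes from the positivity of `x ⬝ H x` and of
`y ⬝ S y = (Aᵀ y) ⬝ H⁻¹ (Aᵀ y)`.
-/

open Matrix

section Positivity

variable {R ι κ : Type*} [Field R] [Preorder R]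
  [Fintype ι] [DecidableEq ι] {H : Matrix ι ι R}

theorem Matrix.isUnit_of_dotProduct_mulVec_pos_s5 (hH : ∀ x, x ≠ 0 → 0 < x ⬝ᵥ (H *ᵥ x)) :
    IsUnit H := by
  rw [← mulVec_injective_iff_isUnit]
  intro a b hab
  by_contra hne
  have hpos := hH (a - b) (sub_ne_zero.mpr hne)
  rw [mulVec_sub, hab, sub_self, dotProduct_zero] at hpos
  exact hpos.false

theorem Matrix.dotProduct_inv_mulVec_pos_s5 (hH : ∀ x, x ≠ 0 → 0 < x ⬝ᵥ (H *ᵥ x)) :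
    ∀ z, z ≠ 0 → 0 < z ⬝ᵥ (H⁻¹ *ᵥ z) := by
  intro z hz
  have hdet := (isUnit_iff_isUnit_det H).mp (isUnit_of_dotProduct_mulVec_pos_s5 hH)
  have hHw : H *ᵥ (H⁻¹ *ᵥ z) = z := by rw [mulVec_mulVec, mul_nonsing_inv _ hdet, one_mulVec]
  -- `z ⬝ H⁻¹ z = (H w) ⬝ w = w ⬝ H w` for `w = H⁻¹ z`
  nth_rewrite 1 [← hHw]
  rw [dotProduct_comm]
  exact hH _ fun hw => hz (by rw [← hHw, hw, mulVec_zero])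

variable [Fintype κ] {A : Matrix κ ι R}

theorem Matrix.dotProduct_mul_inv_mul_transpose_mulVec_pos
    (hH : ∀ x, x ≠ 0 → 0 < x ⬝ᵥ (H *ᵥ x)) (hA : ∀ y, Aᵀ *ᵥ y = 0 → y = 0) :
    ∀ y, y ≠ 0 → 0 < y ⬝ᵥ ((A * H⁻¹ * Aᵀ) *ᵥ y) := by
  intro y hy
  rw [← mulVec_mulVec, ← mulVec_mulVec, dotProduct_mulVec, ← mulVec_transpose]
  exact dotProduct_inv_mulVec_pos_s5 hH _ fun h => hy (hA y h)

end Positivity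

theorem Matrix.eq_one_or_sq_eq_add_one_of_fromBlocks_mulVec_eq_smul {R ι κ : Type*} [Field R]
    [Fintype ι] [DecidableEq ι] [Fintype κ] [DecidableEq κ] {H : Matrix ι ι R} {A : Matrix κ ι R}
    (hH : IsUnit H) (hS : IsUnit (A * H⁻¹ * Aᵀ)) {lam : R} {v : ι ⊕ κ → R} (hv : v ≠ 0)
    (hKv : fromBlocks H Aᵀ A 0 *ᵥ v = lam • (fromBlocks H 0 0 (A * H⁻¹ * Aᵀ) *ᵥ v)) :
    lam = 1 ∨ lam ^ 2 = lam + 1 := by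
  set S := A * H⁻¹ * Aᵀ
  obtain ⟨x, y, rfl⟩ : ∃ x y, v = Sum.elim x y := ⟨_, _, (Sum.elim_comp_inl_inr v).symm⟩
  simp only [fromBlocks_mulVec, Sum.elim_comp_inl, Sum.elim_comp_inr, zero_mulVec, add_zero,
    zero_add] at hKv
  have hTop : H *ᵥ x + Aᵀ *ᵥ y = lam • (H *ᵥ x) := funext fun i => by
    simpa using congrFun hKv (Sum.inl i)
  have hBot : A *ᵥ x = lam • (S *ᵥ y) := funext fun i => by
    simpa using congrFun hKv (Sum.inr i)
  have hAty : Aᵀ *ᵥ y = (lam - 1) • (H *ᵥ x) := by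
    rw [sub_smul, one_smul, ← hTop, add_sub_cancel_left]
  by_cases hy : y = 0
  · have hx : x ≠ 0 := by
      rintro rfl
      exact hv (by rw [hy, Sum.elim_zero_zero])
    have hHx : H *ᵥ x ≠ 0 := fun h =>
      hx (mulVec_injective_iff_isUnit.mpr hH (h.trans (mulVec_zero H).symm))
    rw [hy, mulVec_zero, eq_comm, smul_eq_zero] at hAty
    exact Or.inl (sub_eq_zero.mp (hAty.resolve_right hHx))
  · have hSy : S *ᵥ y ≠ 0 := fun h =>
      hy (mulVec_injective_iff_isUnit.mpr hS (h.trans (mulVec_zero S).symm))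
    have hHinv : H⁻¹ *ᵥ (H *ᵥ x) = x := by
      rw [mulVec_mulVec, nonsing_inv_mul H ((isUnit_iff_isUnit_det H).mp hH), one_mulVec]
    have hSyy : (lam ^ 2 - lam) • (S *ᵥ y) = (1 : R) • (S *ᵥ y) := calc
      _ = (lam - 1) • (A *ᵥ x) := by rw [hBot, smul_smul]; congr 1; ring
      _ = A *ᵥ (H⁻¹ *ᵥ (Aᵀ *ᵥ y)) := by
        rw [hAty, mulVec_smul, mulVec_smul, hHinv]
      _ = _ := by rw [one_smul]; simp only [S, mulVec_mulVec, Matrix.mul_assoc]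
    exact Or.inr (by linear_combination smul_left_injective R hSy hSyy)

theorem Real.eq_goldenRatio_or_eq_goldenConj_of_sq_eq_add_one {x : ℝ} (hx : x ^ 2 = x + 1) :
    x = goldenRatio ∨ x = goldenConj := by
  have : (x - goldenRatio) * (x - goldenConj) = 0 := by
    linear_combination hx - x * goldenRatio_add_goldenConj + goldenRatio_mul_goldenConj
  rcases mul_eq_zero.mp this with h | h
  · exact Or.inl (sub_eq_zero.mp h)
  · exact Or.inr (sub_eq_zero.mp h)

theorem stmt_5_general (n m : ℕ) (H : Matrix (Fin n) (Fin n) ℝ) (A : Matrix (Fin m) (Fin n) ℝ)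
    (hHpd : ∀ x : Fin n → ℝ, x ≠ 0 → 0 < x ⬝ᵥ (H *ᵥ x))
    (hrank : ∀ y : Fin m → ℝ, Aᵀ *ᵥ y = 0 → y = 0) :
    let S : Matrix (Fin m) (Fin m) ℝ := A * H⁻¹ * Aᵀ
    let K : Matrix (Fin n ⊕ Fin m) (Fin n ⊕ Fin m) ℝ :=
      Matrix.fromBlocks H Aᵀ A (0 : Matrix (Fin m) (Fin m) ℝ)
    let T : Matrix (Fin n ⊕ Fin m) (Fin n ⊕ Fin m) ℝ :=
      Matrix.fromBlocks H 0 0 S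
    let M : Matrix (Fin n ⊕ Fin m) (Fin n ⊕ Fin m) ℝ := T⁻¹ * K
    ∀ (lam : ℝ) (v : Fin n ⊕ Fin m → ℝ), v ≠ 0 → M *ᵥ v = lam • v →
      lam = 1 ∨ lam = (1 + Real.sqrt 5) / 2 ∨ lam = (1 - Real.sqrt 5) / 2 := by
  intro S K T M lam v hv hMv
  have hH : IsUnit H := isUnit_of_dotProduct_mulVec_pos_s5 hHpd
  have hS : IsUnit S :=
    isUnit_of_dotProduct_mulVec_pos_s5 (dotProduct_mul_inv_mul_transpose_mulVec_pos hHpd hrank)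
  have hT : IsUnit T.det := (isUnit_iff_isUnit_det T).mp (isUnit_fromBlocks_zero₂₁.mpr ⟨hH, hS⟩)
  have hKv : K *ᵥ v = lam • (T *ᵥ v) := by
    rw [← mulVec_smul, ← hMv, mulVec_mulVec, mul_nonsing_inv_cancel_left T K hT]
  exact (eq_one_or_sq_eq_add_one_of_fromBlocks_mulVec_eq_smul hH hS hv hKv).imp_right
    Real.eq_goldenRatio_or_eq_goldenConj_of_sq_eq_add_one

/-- With `H` symmetric positive definite, `A` of full row rank, `S = A H⁻¹ Aᵀ`,
`K = [[H, Aᵀ],[A, 0]]`, `T = diag(H, S)` and `M = T⁻¹K`, every eigenvalue of `M`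
belongs to `{1, (1+√5)/2, (1−√5)/2}`. -/
theorem stmt_5 (n m : ℕ) (H : Matrix (Fin n) (Fin n) ℝ) (A : Matrix (Fin m) (Fin n) ℝ)
    (hHsymm : H.IsSymm) (hHpd : ∀ x : Fin n → ℝ, x ≠ 0 → 0 < x ⬝ᵥ (H *ᵥ x))
    (hrank : ∀ y : Fin m → ℝ, Aᵀ *ᵥ y = 0 → y = 0) :
    let S : Matrix (Fin m) (Fin m) ℝ := A * H⁻¹ * Aᵀ
    let K : Matrix (Fin n ⊕ Fin m) (Fin n ⊕ Fin m) ℝ :=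
      Matrix.fromBlocks H Aᵀ A (0 : Matrix (Fin m) (Fin m) ℝ)
    let T : Matrix (Fin n ⊕ Fin m) (Fin n ⊕ Fin m) ℝ :=
      Matrix.fromBlocks H 0 0 S
    let M : Matrix (Fin n ⊕ Fin m) (Fin n ⊕ Fin m) ℝ := T⁻¹ * K
    ∀ (lam : ℝ) (v : Fin n ⊕ Fin m → ℝ), v ≠ 0 → M *ᵥ v = lam • v →
      lam = 1 ∨ lam = (1 + Real.sqrt 5) / 2 ∨ lam = (1 - Real.sqrt 5) / 2 :=
  stmt_5_general n m H A hHpd hrank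
end

section
/- Let H be a real symmetric n×n matrix, Hp a real symmetric positive definite n×n matrix, A a real m×n matrix with full row rank, and Z a real n×(n−m) matrix whose columns form a basis of the null space of A (i.e., AZ = 0, Z is injective, and every x with Ax = 0 lies in the range of Z). Suppose λ ≠ 1 is a generalized eigenvalue of the pencil (K, Tc) with K = [[H, Aᵀ],[A, 0]] and Tc = [[Hp, Aᵀ],[A, 0]], i.e., there exist (x, y) ≠ (0, 0) with H x + Aᵀ y = λ (Hp x + Aᵀ y) and A x = λ A x. Then there exists a nonzero w ∈ ℝ^{n−m} with (Zᵀ H Z) w = λ (Zᵀ Hp Z) w. -/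
open Matrix

/-- Every generalized eigenvalue `λ ≠ 1` of the pencil `(K, Tc)` with
`K = [[H, Aᵀ],[A, 0]]` and constraint preconditioner `Tc = [[Hp, Aᵀ],[A, 0]]` is a
generalized eigenvalue of the reduced Hessian pencil `(Zᵀ H Z, Zᵀ Hp Z)`. -/
theorem stmt_10 (n m : ℕ) (H Hp : Matrix (Fin n) (Fin n) ℝ) (A : Matrix (Fin m) (Fin n) ℝ)
    (Z : Matrix (Fin n) (Fin (n - m)) ℝ)
    (hH : H.IsSymm)
    (hHpsymm : Hp.IsSymm) (hHppd : ∀ x : Fin n → ℝ, x ≠ 0 → 0 < x ⬝ᵥ (Hp *ᵥ x))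
    (hrank : ∀ y : Fin m → ℝ, Aᵀ *ᵥ y = 0 → y = 0)
    (hAZ : A * Z = 0)
    (hZinj : ∀ w : Fin (n - m) → ℝ, Z *ᵥ w = 0 → w = 0)
    (hZspan : ∀ x : Fin n → ℝ, A *ᵥ x = 0 → ∃ w : Fin (n - m) → ℝ, x = Z *ᵥ w)
    (lam : ℝ) (hlam : lam ≠ 1) (x : Fin n → ℝ) (y : Fin m → ℝ)
    (hxy : ¬(x = 0 ∧ y = 0))
    (heig1 : H *ᵥ x + Aᵀ *ᵥ y = lam • (Hp *ᵥ x + Aᵀ *ᵥ y))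
    (heig2 : A *ᵥ x = lam • (A *ᵥ x)) :
    ∃ w : Fin (n - m) → ℝ, w ≠ 0 ∧
      (Zᵀ * H * Z) *ᵥ w = lam • ((Zᵀ * Hp * Z) *ᵥ w) := by
  -- A x = 0 since lam ≠ 1
  have hAx : A *ᵥ x = 0 := by
    have h : (1 - lam) • (A *ᵥ x) = 0 := by
      rw [sub_smul, one_smul]; exact sub_eq_zero_of_eq heig2
    have h1 : (1 - lam) ≠ 0 := sub_ne_zero.mpr (Ne.symm hlam)
    exact (smul_eq_zero.mp h).resolve_left h1
  obtain ⟨w, hw⟩ := hZspan x hAx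
  -- x ≠ 0
  have hx0 : x ≠ 0 := by
    intro hx
    apply hxy
    refine ⟨hx, ?_⟩
    apply hrank
    have h1 : H *ᵥ x = 0 := by rw [hx, mulVec_zero]
    have h2 : Hp *ᵥ x = 0 := by rw [hx, mulVec_zero]
    rw [h1, h2, zero_add] at heig1
    have h : (1 - lam) • (Aᵀ *ᵥ y) = 0 := by
      rw [sub_smul, one_smul]; exact sub_eq_zero_of_eq heig1
    exact (smul_eq_zero.mp h).resolve_left (sub_ne_zero.mpr (Ne.symm hlam))
  have hwne : w ≠ 0 := by
    intro h0
    apply hx0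
    rw [hw, h0, mulVec_zero]
  refine ⟨w, hwne, ?_⟩
  -- Zᵀ Aᵀ y = (A Z)ᵀ y = 0
  have hZAt : Zᵀ *ᵥ (Aᵀ *ᵥ y) = 0 := by
    rw [mulVec_mulVec, ← transpose_mul, hAZ, transpose_zero, zero_mulVec]
  have key : Zᵀ *ᵥ (H *ᵥ x + Aᵀ *ᵥ y) = lam • (Zᵀ *ᵥ (Hp *ᵥ x + Aᵀ *ᵥ y)) := by
    rw [heig1, mulVec_smul]
  rw [mulVec_add, mulVec_add, hZAt, add_zero, add_zero, hw] at key
  simpa [Matrix.mul_assoc, mulVec_mulVec] using key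
end

section
/- Let H be a real symmetric n×n matrix, A a real m×n matrix with full row rank, V a real m×m matrix, and suppose Hp = H + Aᵀ V A is symmetric positive definite. Let Z be a real n×(n−m) matrix whose columns form a basis of the null space of A (i.e., AZ = 0, Z is injective, and every x with Ax = 0 lies in the range of Z). Let K = [[H, Aᵀ],[A, 0]] and Tc = [[Hp, Aᵀ],[A, 0]]. Then every generalized eigenvalue of the pencil (K, Tc) equals 1; that is, if (x, y) ≠ (0, 0) satisfies H x + Aᵀ y = λ (Hp x + Aᵀ y) and A x = λ A x, then λ = 1. -/
open Matrix

/-- With an augmented Lagrangian type regularization `Hp = H + Aᵀ V A` that is symmetric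
positive definite, every generalized eigenvalue of the pencil `(K, Tc)` with
`K = [[H, Aᵀ],[A, 0]]` and `Tc = [[Hp, Aᵀ],[A, 0]]` equals `1`. -/
theorem stmt_11 (n m : ℕ) (H : Matrix (Fin n) (Fin n) ℝ) (A : Matrix (Fin m) (Fin n) ℝ)
    (V : Matrix (Fin m) (Fin m) ℝ) (Z : Matrix (Fin n) (Fin (n - m)) ℝ)
    (hH : H.IsSymm)
    (hrank : ∀ y : Fin m → ℝ, Aᵀ *ᵥ y = 0 → y = 0)
    (hHpsymm : (H + Aᵀ * V * A).IsSymm)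
    (hHppd : ∀ x : Fin n → ℝ, x ≠ 0 → 0 < x ⬝ᵥ ((H + Aᵀ * V * A) *ᵥ x))
    (hAZ : A * Z = 0)
    (hZinj : ∀ w : Fin (n - m) → ℝ, Z *ᵥ w = 0 → w = 0)
    (hZspan : ∀ x : Fin n → ℝ, A *ᵥ x = 0 → ∃ w : Fin (n - m) → ℝ, x = Z *ᵥ w)
    (lam : ℝ) (x : Fin n → ℝ) (y : Fin m → ℝ)
    (hxy : ¬(x = 0 ∧ y = 0))
    (heig1 : H *ᵥ x + Aᵀ *ᵥ y = lam • ((H + Aᵀ * V * A) *ᵥ x + Aᵀ *ᵥ y))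
    (heig2 : A *ᵥ x = lam • (A *ᵥ x)) :
    lam = 1 := by
  by_contra hlam
  -- From heig2: (1 - lam) • (A *ᵥ x) = 0, so A *ᵥ x = 0
  have hAx : A *ᵥ x = 0 := by
    have h : (1 - lam) • (A *ᵥ x) = 0 := by
      rw [sub_smul, one_smul, ← heig2, sub_self]
    have h1 : (1 - lam) ≠ 0 := sub_ne_zero.mpr fun h => hlam h.symm
    exact (smul_eq_zero.mp h).resolve_left h1
  -- Hp *ᵥ x = H *ᵥ x
  have hHp : (H + Aᵀ * V * A) *ᵥ x = H *ᵥ x := by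
    rw [add_mulVec, Matrix.mul_assoc, ← Matrix.mulVec_mulVec, ← Matrix.mulVec_mulVec, hAx]
    simp
  rw [hHp] at heig1
  have hzero : H *ᵥ x + Aᵀ *ᵥ y = 0 := by
    have h : (1 - lam) • (H *ᵥ x + Aᵀ *ᵥ y) = 0 := by
      rw [sub_smul, one_smul, ← heig1]; simp
    have h1 : (1 - lam) ≠ 0 := sub_ne_zero.mpr fun h => hlam h.symm
    exact (smul_eq_zero.mp h).resolve_left h1
  -- x ⬝ᵥ (Aᵀ *ᵥ y) = (A *ᵥ x) ⬝ᵥ y = 0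
  have hxAty : x ⬝ᵥ (Aᵀ *ᵥ y) = 0 := by
    rw [dotProduct_mulVec, vecMul_transpose, hAx, zero_dotProduct]
  have hxHx : x ⬝ᵥ (H *ᵥ x) = 0 := by
    have := congrArg (fun v => x ⬝ᵥ v) hzero
    simp only [dotProduct_add, dotProduct_zero, hxAty, add_zero] at this
    exact this
  have hx0 : x = 0 := by
    by_contra hx
    have := hHppd x hx
    rw [hHp, hxHx] at this
    exact lt_irrefl 0 this
  have hy0 : y = 0 := by
    apply hrank
    have := hzero
    rw [hx0] at this
    simpa using this
  exact hxy ⟨hx0, hy0⟩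
end

section
/- Let f : ℝⁿ → ℝ and g : ℝⁿ → ℝᵖ be functions, and suppose x* ∈ ℝⁿ and μ* ∈ ℝᵖ satisfy: μ*ᵢ ≥ 0 for all i, gᵢ(x*) ≤ 0 for all i, Σᵢ μ*ᵢ gᵢ(x*) = 0, and f(x*) ≤ f(x) + Σᵢ μ*ᵢ gᵢ(x) for all x ∈ ℝⁿ. Let m ∈ ℝᵖ with mᵢ > μ*ᵢ for all i. Consider the penalized (soft-constrained) problem: minimize f(x) + Σᵢ mᵢ sᵢ over pairs (x, s) ∈ ℝⁿ × ℝᵖ with sᵢ ≥ 0 and gᵢ(x) ≤ sᵢ for all i. Then (x*, 0) is feasible and globally optimal for the penalized problem, and every feasible (x, s) achieving the optimal value f(x*) must have s = 0. -/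
open Finset

/-- Exact L1 penalty: under the Lagrangian saddle-point/KKT conditions at `(x*, μ*)` and
penalty weights `mᵢ > μ*ᵢ`, the pair `(x*, 0)` is feasible and globally optimal for the
penalized problem `min f(x) + Σᵢ mᵢ sᵢ s.t. s ≥ 0, g(x) ≤ s`, and any feasible pair
achieving the optimal value `f(x*)` has zero slack. -/
theorem stmt_12 (n p : ℕ) (f : (Fin n → ℝ) → ℝ) (g : (Fin n → ℝ) → (Fin p → ℝ))
    (xstar : Fin n → ℝ) (μstar : Fin p → ℝ)
    (hμ : ∀ i, 0 ≤ μstar i)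
    (hg : ∀ i, g xstar i ≤ 0)
    (hcompl : ∑ i, μstar i * g xstar i = 0)
    (hsaddle : ∀ x : Fin n → ℝ, f xstar ≤ f x + ∑ i, μstar i * g x i)
    (m : Fin p → ℝ) (hm : ∀ i, μstar i < m i) :
    ((∀ i : Fin p, 0 ≤ (0 : ℝ)) ∧ (∀ i, g xstar i ≤ (0 : ℝ))) ∧
    (∀ (x : Fin n → ℝ) (s : Fin p → ℝ), (∀ i, 0 ≤ s i) → (∀ i, g x i ≤ s i) →
      f xstar + ∑ i, m i * (0 : ℝ) ≤ f x + ∑ i, m i * s i) ∧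
    (∀ (x : Fin n → ℝ) (s : Fin p → ℝ), (∀ i, 0 ≤ s i) → (∀ i, g x i ≤ s i) →
      f x + ∑ i, m i * s i = f xstar → s = 0) := by
  have key : ∀ (x : Fin n → ℝ) (s : Fin p → ℝ), (∀ i, 0 ≤ s i) → (∀ i, g x i ≤ s i) →
      f xstar ≤ f x + ∑ i, μstar i * s i := by
    intro x s hs hgs
    have h1 : ∑ i, μstar i * g x i ≤ ∑ i, μstar i * s i :=
      Finset.sum_le_sum fun i _ => mul_le_mul_of_nonneg_left (hgs i) (hμ i)
    have := hsaddle x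
    linarith
  have hμm : ∀ (s : Fin p → ℝ), (∀ i, 0 ≤ s i) → ∑ i, μstar i * s i ≤ ∑ i, m i * s i :=
    fun s hs => Finset.sum_le_sum fun i _ => mul_le_mul_of_nonneg_right (hm i).le (hs i)
  refine ⟨⟨fun _ => le_refl 0, hg⟩, ?_, ?_⟩
  · intro x s hs hgs
    have h1 := key x s hs hgs
    have h2 := hμm s hs
    simp only [mul_zero, Finset.sum_const_zero]
    linarith
  · intro x s hs hgs heq
    have h1 := key x s hs hgs
    have h2 := hμm s hs
    have h3 : ∑ i, (m i - μstar i) * s i ≤ 0 := by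
      have : ∑ i, (m i - μstar i) * s i = (∑ i, m i * s i) - ∑ i, μstar i * s i := by
        rw [← Finset.sum_sub_distrib]; exact Finset.sum_congr rfl fun i _ => by ring
      rw [this]; linarith
    funext i
    have hterm : ∀ j ∈ Finset.univ, 0 ≤ (m j - μstar j) * s j :=
      fun j _ => mul_nonneg (by linarith [hm j]) (hs j)
    have h4 : ∑ i, (m i - μstar i) * s i = 0 := le_antisymm h3 (Finset.sum_nonneg hterm)
    have h5 := (Finset.sum_eq_zero_iff_of_nonneg hterm).mp h4 i (Finset.mem_univ i)
    have : s i = 0 := by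
      rcases mul_eq_zero.mp h5 with h | h
      · exact absurd h (by linarith [hm i])
      · exact h
    simpa using this
end

section
/- Let H be a real symmetric positive semidefinite n×n matrix, A a real m×n matrix, and γ > 0. Let K = [[H, Aᵀ],[A, 0]] and let Ta = [[H + γAᵀA, 0],[0, γ⁻¹ I_m]] be the augmented Lagrangian block-diagonal preconditioner. Then for every x ∈ ℝⁿ, the vector z = (x, γAx) ∈ ℝ^{n+m} satisfies K z = Ta z. In particular, if H + γAᵀA is invertible then 1 is an eigenvalue of Ta⁻¹K whose eigenspace contains the n-dimensional subspace {(x, γAx) : x ∈ ℝⁿ}. -/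
open Matrix

/-- For the KKT matrix `K = [[H, Aᵀ],[A, 0]]` and the augmented Lagrangian preconditioner
`Ta = diag(H + γAᵀA, γ⁻¹I)` with `γ > 0`, every vector `z = (x, γAx)` satisfies
`K z = Ta z`; in particular, if `H + γAᵀA` is invertible, `Ta⁻¹ K z = z`, i.e. `1` is an
eigenvalue of `Ta⁻¹K` whose eigenspace contains the subspace `{(x, γAx) : x ∈ ℝⁿ}`. -/
theorem stmt_15 (n m : ℕ) (H : Matrix (Fin n) (Fin n) ℝ) (A : Matrix (Fin m) (Fin n) ℝ)
    (hHsymm : H.IsSymm) (hHpsd : ∀ x : Fin n → ℝ, 0 ≤ x ⬝ᵥ (H *ᵥ x))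
    (γ : ℝ) (hγ : 0 < γ) :
    let K : Matrix (Fin n ⊕ Fin m) (Fin n ⊕ Fin m) ℝ :=
      Matrix.fromBlocks H Aᵀ A (0 : Matrix (Fin m) (Fin m) ℝ)
    let Ta : Matrix (Fin n ⊕ Fin m) (Fin n ⊕ Fin m) ℝ :=
      Matrix.fromBlocks (H + γ • (Aᵀ * A)) 0 0 (γ⁻¹ • (1 : Matrix (Fin m) (Fin m) ℝ))
    let z : (Fin n → ℝ) → (Fin n ⊕ Fin m → ℝ) := fun x => Sum.elim x (γ • (A *ᵥ x))
    (∀ x : Fin n → ℝ, K *ᵥ z x = Ta *ᵥ z x) ∧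
      (IsUnit (H + γ • (Aᵀ * A)) → ∀ x : Fin n → ℝ, (Ta⁻¹ * K) *ᵥ z x = z x) := by
  intro K Ta z
  have key : ∀ x : Fin n → ℝ, K *ᵥ z x = Ta *ᵥ z x := by
    intro x
    show Matrix.fromBlocks H Aᵀ A 0 *ᵥ Sum.elim x (γ • (A *ᵥ x)) =
      Matrix.fromBlocks (H + γ • (Aᵀ * A)) 0 0 (γ⁻¹ • (1 : Matrix (Fin m) (Fin m) ℝ)) *ᵥ
        Sum.elim x (γ • (A *ᵥ x))
    simp only [Matrix.fromBlocks_mulVec, Sum.elim_comp_inl, Sum.elim_comp_inr,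
      Matrix.add_mulVec, Matrix.zero_mulVec, Matrix.mulVec_smul,
      Matrix.smul_mulVec, Matrix.mulVec_mulVec, Matrix.one_mulVec, smul_zero, Matrix.zero_mul, Matrix.smul_mul, Matrix.one_mul,
      zero_add, add_zero, smul_smul, mul_inv_cancel₀ hγ.ne', one_smul]
  refine ⟨key, fun hU x => ?_⟩
  have hD : IsUnit (γ⁻¹ • (1 : Matrix (Fin m) (Fin m) ℝ)) := by
    rw [Matrix.isUnit_iff_isUnit_det, Matrix.det_smul, Matrix.det_one, mul_one]
    exact (isUnit_iff_ne_zero.mpr (inv_ne_zero hγ.ne')).pow _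
  have hTa : IsUnit Ta := Matrix.isUnit_fromBlocks_zero₂₁.mpr ⟨hU, hD⟩
  rw [← Matrix.mulVec_mulVec, key, Matrix.mulVec_mulVec,
    Matrix.nonsing_inv_mul _ ((Matrix.isUnit_iff_isUnit_det _).mp hTa), Matrix.one_mulVec]
end
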